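/- arXiv:2605.04658 — 4 statements merged into one kernel-verified Lean document; each statement's English description precedes it below -/
import Mathlib

section
/- Let φ : ℝ^n → ℝ be C-semiconcave and let γ : [0,T] → ℝ^n be Lipschitz. Then φ∘γ is Lipschitz, and for almost every s ∈ (0,T) the derivatives γ'(s) and (φ∘γ)'(s) exist and (φ∘γ)'(s) = ⟨p, γ'(s)⟩ for every p ∈ D⁺φ(γ(s)); in particular, at almost every s the value ⟨p, γ'(s)⟩ is independent of the choice of p ∈ D⁺φ(γ(s)). -/
/-!
A semiconcave function is concave plus a smooth quadratic, hence locally Lipschitz, so `φ ∘ γ`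
is Lipschitz on `[0, T]` and, by Rademacher's theorem, `γ` and `φ ∘ γ` are both differentiable
at almost every interior time `s`. At such an `s`, for `p ∈ D⁺φ(γ s)` the superdifferential
inequality makes `g t := φ (γ t) - ⟪p, γ t⟫` satisfy `g t - g s ≤ o(|t - s|)` on both sides
of `s`, so the one-sided difference quotients of `g` force `g'(s) = (φ ∘ γ)'(s) - ⟪p, γ'(s)⟫`
to vanish.
-/

open MeasureTheory Set Filter Topology
open scoped RealInnerProductSpace NNReal

noncomputable section

abbrev E (n : ℕ) := EuclideanSpace ℝ (Fin n)

variable {n : ℕ}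

/-- `φ` is semiconcave with linear modulus and constant `C`. -/
def Semiconcave (C : ℝ) (φ : E n → ℝ) : Prop :=
  ConcaveOn ℝ Set.univ (fun x => φ x - C / 2 * ‖x‖ ^ 2)

/-- The superdifferential of `φ` at `x`. -/
def superdiff (φ : E n → ℝ) (x : E n) : Set (E n) :=
  {p | ∀ ε > 0, ∀ᶠ y in 𝓝 x, φ y - φ x - ⟪p, y - x⟫ ≤ ε * ‖y - x‖}

lemma HasDerivAt.eq_zero_of_forall_eventually_sub_le {g : ℝ → ℝ} {a s : ℝ}
    (hg : HasDerivAt g a s) (h : ∀ ε > 0, ∀ᶠ t in 𝓝 s, g t - g s ≤ ε * |t - s|) : a = 0 := by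
  have hslope := hasDerivAt_iff_tendsto_slope.1 hg
  have hright : Tendsto (slope g s) (𝓝[>] s) (𝓝 a) :=
    hslope.mono_left (nhdsWithin_mono _ fun _ ht => ne_of_gt ht)
  have hleft : Tendsto (slope g s) (𝓝[<] s) (𝓝 a) :=
    hslope.mono_left (nhdsWithin_mono _ fun _ ht => ne_of_lt ht)
  refine le_antisymm (le_of_forall_pos_le_add fun ε hε => ?_)
    (le_of_forall_pos_le_add fun ε hε => ?_)
  · refine le_of_tendsto hright ?_
    filter_upwards [(h ε hε).filter_mono nhdsWithin_le_nhds, self_mem_nhdsWithin] with t ht hts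
    rw [abs_of_pos (sub_pos.2 hts)] at ht
    rwa [slope_def_field, zero_add, div_le_iff₀ (sub_pos.2 hts)]
  · suffices -ε ≤ a by linarith
    refine ge_of_tendsto hleft ?_
    filter_upwards [(h ε hε).filter_mono nhdsWithin_le_nhds, self_mem_nhdsWithin] with t ht hts
    rw [abs_of_neg (sub_neg.2 hts)] at ht
    rw [slope_def_field, le_div_iff_of_neg (sub_neg.2 hts)]
    linarith

lemma eventually_sub_inner_le_of_mem_superdiff {F : Type*} [NormedAddCommGroup F]
    {φ : E n → ℝ} {γ : F → E n} {s : F} {p : E n} (hp : p ∈ superdiff φ (γ s))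
    (hγ : (γ · - γ s) =O[𝓝 s] (· - s)) :
    ∀ ε > 0, ∀ᶠ t in 𝓝 s, φ (γ t) - φ (γ s) - ⟪p, γ t - γ s⟫ ≤ ε * ‖t - s‖ := by
  intro ε hε
  obtain ⟨c, hc, hγc⟩ := hγ.exists_pos
  have hcont : Tendsto γ (𝓝 s) (𝓝 (γ s)) :=
    tendsto_sub_nhds_zero_iff.1 (hγ.trans_tendsto (tendsto_sub_nhds_zero_iff.2 tendsto_id))
  filter_upwards [hcont.eventually (hp (ε / c) (div_pos hε hc)), hγc.bound] with t ht hbound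
  calc φ (γ t) - φ (γ s) - ⟪p, γ t - γ s⟫ ≤ ε / c * ‖γ t - γ s‖ := ht
    _ ≤ ε / c * (c * ‖t - s‖) := by gcongr
    _ = ε * ‖t - s‖ := by field_simp

lemma hasDerivAt_comp_eq_inner_of_mem_superdiff {φ : E n → ℝ} {γ : ℝ → E n} {s d : ℝ}
    {v p : E n} (hγ : HasDerivAt γ v s) (hφγ : HasDerivAt (φ ∘ γ) d s)
    (hp : p ∈ superdiff φ (γ s)) : d = ⟪p, v⟫ := by
  have hg : HasDerivAt (fun t => φ (γ t) - ⟪p, γ t⟫) (d - ⟪p, v⟫) s :=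
    hφγ.sub (by simpa using (hasDerivAt_const s p).inner ℝ hγ)
  refine sub_eq_zero.1 (hg.eq_zero_of_forall_eventually_sub_le fun ε hε => ?_)
  filter_upwards [eventually_sub_inner_le_of_mem_superdiff hp hγ.isBigO_sub ε hε] with t ht
  rw [inner_sub_right, Real.norm_eq_abs] at ht
  linarith

lemma Semiconcave.locallyLipschitz {C : ℝ} {φ : E n → ℝ} (hφ : Semiconcave C φ) :
    LocallyLipschitz φ := by
  have hquad : LocallyLipschitz fun x : E n => C / 2 * ‖x‖ ^ 2 :=
    (contDiff_const.mul (contDiff_norm_sq ℝ)).locallyLipschitz (𝕂 := ℝ)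
  simpa only [sub_add_cancel] using (ConcaveOn.locallyLipschitz hφ).add hquad

theorem stmt1_general (C : ℝ) (φ : E n → ℝ) (hφ : Semiconcave C φ)
    (T : ℝ) (γ : ℝ → E n) (K : ℝ≥0)
    (hγ : LipschitzOnWith K γ (Set.Icc 0 T)) :
    (∃ K' : ℝ≥0, LipschitzOnWith K' (φ ∘ γ) (Set.Icc 0 T)) ∧
    ∀ᵐ s ∂(volume.restrict (Set.Ioo 0 T)), ∃ v : E n,
      HasDerivWithinAt γ v (Set.Icc 0 T) s ∧
      ∀ p ∈ superdiff φ (γ s),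
        HasDerivWithinAt (φ ∘ γ) ⟪p, v⟫ (Set.Icc 0 T) s := by
  obtain ⟨Kφ, hKφ⟩ := hφ.locallyLipschitz.locallyLipschitzOn.exists_lipschitzOnWith_of_compact
    (isCompact_Icc.image_of_continuousOn hγ.continuousOn)
  have hφγ : LipschitzOnWith (Kφ * K) (φ ∘ γ) (Icc 0 T) := hKφ.comp hγ (mapsTo_image γ _)
  refine ⟨⟨_, hφγ⟩, ?_⟩
  rw [ae_restrict_iff' measurableSet_Ioo]
  filter_upwards [hγ.ae_differentiableWithinAt_of_mem, hφγ.ae_differentiableWithinAt_of_mem]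
    with s hγs hφγs hs
  have hIcc : Icc 0 T ∈ 𝓝 s := Icc_mem_nhds hs.1 hs.2
  have hγd := ((hγs (Ioo_subset_Icc_self hs)).differentiableAt hIcc).hasDerivAt
  have hφγd := ((hφγs (Ioo_subset_Icc_self hs)).differentiableAt hIcc).hasDerivAt
  refine ⟨_, hγd.hasDerivWithinAt, fun p hp => ?_⟩
  rw [← hasDerivAt_comp_eq_inner_of_mem_superdiff hγd hφγd hp]
  exact hφγd.hasDerivWithinAt

/-- If `φ` is `C`-semiconcave and `γ : [0,T] → ℝⁿ` is Lipschitz, then `φ ∘ γ` is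
Lipschitz and, for a.e. `s ∈ (0,T)`, both `γ` and `φ ∘ γ` are differentiable at `s`
and `(φ∘γ)'(s) = ⟪p, γ'(s)⟫` for every `p ∈ D⁺φ(γ(s))`; in particular the latter
value is independent of the choice of `p`. -/
theorem stmt1 (C : ℝ) (hC : 0 ≤ C) (φ : E n → ℝ) (hφ : Semiconcave C φ)
    (T : ℝ) (hT : 0 < T) (γ : ℝ → E n) (K : ℝ≥0)
    (hγ : LipschitzOnWith K γ (Set.Icc 0 T)) :
    (∃ K' : ℝ≥0, LipschitzOnWith K' (φ ∘ γ) (Set.Icc 0 T)) ∧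
    ∀ᵐ s ∂(volume.restrict (Set.Ioo 0 T)), ∃ v : E n,
      HasDerivWithinAt γ v (Set.Icc 0 T) s ∧
      ∀ p ∈ superdiff φ (γ s),
        HasDerivWithinAt (φ ∘ γ) ⟪p, v⟫ (Set.Icc 0 T) s :=
  stmt1_general C φ hφ T γ K hγ

end
end

section
/- Let φ : ℝ^n → ℝ be C-semiconcave and κ-Lipschitz, let H be a Tonelli Hamiltonian with Lagrangian L, let p : ℝ^n → ℝ^n be a Borel measurable map with p(x) ∈ D⁺φ(x) for every x, and let γ : [0,T] → ℝ^n be Lipschitz. Then φ(γ(T)) − φ(γ(0)) ≤ ∫₀^T [ L(γ(s),γ'(s)) + H(γ(s), p(γ(s))) ] ds, and equality holds if and only if γ'(s) = H_p(γ(s), p(γ(s))) for almost every s ∈ [0,T]. -/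
/-!
Along the Lipschitz curve `γ`, the function `t ↦ φ (γ t)` is Lipschitz, hence absolutely
continuous, so `φ (γ T) - φ (γ 0)` is the integral of its a.e. derivative. At a time where both
`γ` and `φ ∘ γ` are differentiable, the superdifferential inequality for `p ∈ D⁺φ(γ t)`, read to the
right and to the left of `t`, pins the derivative of `φ ∘ γ` down to `⟪p, γ'⟫`. The Fenchel–Young
inequality `⟪p, v⟫ ≤ L(x, v) + H(x, p)` then gives the bound, and as `H x` is convex and
differentiable, equality holds pointwise exactly when `v = H_p(x, p)`; since the difference of the
two integrands is nonnegative, equality of the integrals is equality of the integrands a.e.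
-/

open MeasureTheory Set Filter Topology intervalIntegral
open scoped RealInnerProductSpace NNReal

noncomputable section

variable {n : ℕ}

/-- Tonelli Hamiltonian. -/
structure IsTonelli (H : E n → E n → ℝ) : Prop where
  smooth : ContDiff ℝ 2 (fun q : E n × E n => H q.1 q.2)
  posdef : ∀ x p v : E n, v ≠ 0 → 0 < iteratedFDeriv ℝ 2 (H x) p ![v, v]
  superlinear : ∀ A : ℝ, 0 ≤ A → ∃ B : ℝ, ∀ x p, A * ‖p‖ - B ≤ H x p

/-- The Tonelli Lagrangian associated to `H` via the Fenchel transform. -/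
def Lag (H : E n → E n → ℝ) (x v : E n) : ℝ := ⨆ p : E n, (⟪p, v⟫ - H x p)

/-- Partial gradient of `H` in the momentum variable. -/
def Hp (H : E n → E n → ℝ) (x p : E n) : E n := gradient (H x) p

theorem HasDerivAt.eq_zero_of_sub_le_mul_abs {F : ℝ → ℝ} {c s : ℝ} (hF : HasDerivAt F c s)
    (h : ∀ ε > 0, ∀ᶠ t in 𝓝 s, F t - F s ≤ ε * |t - s|) : c = 0 := by
  have hslope := hasDerivAt_iff_tendsto_slope.1 hF
  refine le_antisymm (le_of_forall_pos_le_add fun ε hε => ?_)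
    (le_of_forall_pos_le_add fun ε hε => ?_)
  · refine le_of_tendsto (hslope.mono_left (nhdsWithin_mono s fun t (ht : t ∈ Ioi s) => ht.ne')) ?_
    filter_upwards [self_mem_nhdsWithin, nhdsWithin_le_nhds (h ε hε)] with t (ht : s < t) hle
    rw [slope_def_field, div_le_iff₀ (sub_pos.2 ht)]
    rw [abs_of_pos (sub_pos.2 ht)] at hle
    linarith
  · suffices -ε ≤ c by linarith
    refine ge_of_tendsto (hslope.mono_left (nhdsWithin_mono s fun t (ht : t ∈ Iio s) => ht.ne)) ?_
    filter_upwards [self_mem_nhdsWithin, nhdsWithin_le_nhds (h ε hε)] with t (ht : t < s) hle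
    rw [slope_def_field, le_div_iff_of_neg (sub_neg.2 ht)]
    rw [abs_of_neg (sub_neg.2 ht)] at hle
    linarith

theorem HasDerivAt.eq_inner_of_mem_superdiff {φ : E n → ℝ} {g : ℝ → E n} {s d : ℝ} {v p : E n}
    (hg : HasDerivAt g v s) (hφg : HasDerivAt (fun t => φ (g t)) d s)
    (hp : p ∈ superdiff φ (g s)) : d = ⟪p, v⟫ := by
  have hF : HasDerivAt (fun t => φ (g t) - ⟪p, g t⟫) (d - ⟪p, v⟫) s :=
    hφg.sub (by simpa using (hasDerivAt_const s p).inner ℝ hg)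
  obtain ⟨c, hc, hgO⟩ := hg.hasFDerivAt.isBigO_sub.exists_pos
  suffices d - ⟪p, v⟫ = 0 by linarith
  refine hF.eq_zero_of_sub_le_mul_abs fun ε hε => ?_
  filter_upwards [hgO.bound, hg.continuousAt.eventually (hp (ε / c) (by positivity))]
    with t hgt hφt
  rw [Real.norm_eq_abs] at hgt
  calc φ (g t) - ⟪p, g t⟫ - (φ (g s) - ⟪p, g s⟫)
      = φ (g t) - φ (g s) - ⟪p, g t - g s⟫ := by rw [inner_sub_right]; ring
    _ ≤ ε / c * ‖g t - g s‖ := hφt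
    _ ≤ ε / c * (c * |t - s|) := by gcongr
    _ = ε * |t - s| := by field_simp

theorem norm_le_of_mem_superdiff {κ : ℝ≥0} {φ : E n → ℝ} (hφ : LipschitzWith κ φ) {x p : E n}
    (hp : p ∈ superdiff φ x) : ‖p‖ ≤ κ := by
  -- Test the superdifferential inequality at `x - t • p`, `t ↓ 0`, against the Lipschitz bound.
  refine le_of_forall_pos_le_add fun ε hε => ?_
  have hline : Tendsto (fun t : ℝ => x - t • p) (𝓝[>] 0) (𝓝 x) :=
    tendsto_nhdsWithin_of_tendsto_nhds
      ((by fun_prop : Continuous fun t : ℝ => x - t • p).tendsto' 0 x (by simp))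
  obtain ⟨t, ht, hsup⟩ :=
    (eventually_mem_nhdsWithin.and (hline.eventually (hp ε hε))).exists
  have ht : 0 < t := ht
  have hlip : φ x - φ (x - t • p) ≤ κ * (t * ‖p‖) := by
    have := hφ.dist_le_mul x (x - t • p)
    rw [Real.dist_eq, dist_eq_norm, sub_sub_cancel, norm_smul, Real.norm_of_nonneg ht.le] at this
    exact (le_abs_self _).trans this
  have hstep : x - t • p - x = -(t • p) := by abel
  rw [hstep, inner_neg_right, real_inner_smul_right, real_inner_self_eq_norm_sq, norm_neg,
    norm_smul, Real.norm_of_nonneg ht.le] at hsup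
  have hsq : ‖p‖ * ‖p‖ ≤ (κ + ε) * ‖p‖ := le_of_mul_le_mul_left (by linarith) ht
  nlinarith [norm_nonneg p]

namespace IsTonelli

variable {H : E n → E n → ℝ}

theorem contDiff_momentum (hH : IsTonelli H) (x : E n) : ContDiff ℝ 2 (H x) :=
  hH.smooth.comp (contDiff_prodMk_right x)

theorem exists_inner_sub_le (hH : IsTonelli H) {R : ℝ} (hR : 0 ≤ R) :
    ∃ B, ∀ x p v : E n, ‖v‖ ≤ R → ⟪p, v⟫ - H x p ≤ B := by
  obtain ⟨B, hB⟩ := hH.superlinear R hR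
  refine ⟨B, fun x p v hv => ?_⟩
  have := hB x p
  nlinarith [real_inner_le_norm p v, mul_le_mul_of_nonneg_left hv (norm_nonneg p)]

theorem bddAbove_range_inner_sub (hH : IsTonelli H) (x v : E n) :
    BddAbove (range fun p => ⟪p, v⟫ - H x p) := by
  obtain ⟨B, hB⟩ := hH.exists_inner_sub_le (norm_nonneg v)
  exact ⟨B, by rintro _ ⟨p, rfl⟩; exact hB x p v le_rfl⟩

theorem exists_lag_le (hH : IsTonelli H) {R : ℝ} (hR : 0 ≤ R) :
    ∃ B, ∀ x v : E n, ‖v‖ ≤ R → Lag H x v ≤ B := by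
  obtain ⟨B, hB⟩ := hH.exists_inner_sub_le hR
  exact ⟨B, fun x v hv => ciSup_le fun p => hB x p v hv⟩

theorem inner_le_lag_add (hH : IsTonelli H) (x p v : E n) : ⟪p, v⟫ ≤ Lag H x v + H x p := by
  have := le_ciSup (hH.bddAbove_range_inner_sub x v) p
  rw [← Lag] at this
  linarith

theorem measurable_lag (hH : IsTonelli H) : Measurable fun q : E n × E n => Lag H q.1 q.2 := by
  have hHc := hH.smooth.continuous
  refine LowerSemicontinuous.measurable
    (lowerSemicontinuous_ciSup (fun q => hH.bddAbove_range_inner_sub q.1 q.2) fun p => ?_)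
  exact (by fun_prop : Continuous fun q : E n × E n => ⟪p, q.2⟫ - H q.1 p).lowerSemicontinuous

theorem add_inner_Hp_le (hH : IsTonelli H) (x p q : E n) :
    H x p + ⟪Hp H x p, q - p⟫ ≤ H x q := by
  -- On the line `t ↦ p + t • (q - p)` the second derivative of `H x` is a Hessian value
  -- `D²H(w, w) ≥ 0`, so the restriction is convex and lies above its tangent at `0`.
  set w := q - p
  have hC2 := hH.contDiff_momentum x
  have hD : Differentiable ℝ (H x) := hC2.differentiable two_ne_zero
  have hD' : Differentiable ℝ (fderiv ℝ (H x)) :=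
    (hC2.fderiv_right le_rfl).differentiable one_ne_zero
  have hline (t : ℝ) : HasDerivAt (fun t : ℝ => p + t • w) w t := by
    simpa using ((hasDerivAt_id t).smul_const w).const_add p
  have hg (t : ℝ) : HasDerivAt (fun t => H x (p + t • w)) (fderiv ℝ (H x) (p + t • w) w) t :=
    (hD _).hasFDerivAt.comp_hasDerivAt t (hline t)
  have hg' (t : ℝ) : HasDerivAt (fun t => fderiv ℝ (H x) (p + t • w) w)
      (fderiv ℝ (fderiv ℝ (H x)) (p + t • w) w w) t := by
    simpa using ((hD' _).hasFDerivAt.comp_hasDerivAt t (hline t)).clm_apply (hasDerivAt_const t w)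
  have hg'' (t : ℝ) : 0 ≤ fderiv ℝ (fderiv ℝ (H x)) (p + t • w) w w := by
    rcases eq_or_ne w 0 with hw | hw
    · simp [hw]
    · have := hH.posdef x (p + t • w) w hw
      rw [iteratedFDeriv_two_apply] at this
      exact this.le
  have hconv : ConvexOn ℝ univ fun t => H x (p + t • w) :=
    convexOn_of_hasDerivWithinAt2_nonneg convex_univ
      (fun t _ => (hg t).continuousAt.continuousWithinAt)
      (fun t _ => (hg t).hasDerivWithinAt) (fun t _ => (hg' t).hasDerivWithinAt)
      fun t _ => hg'' t
  have := hconv.le_slope_of_hasDerivAt (mem_univ 0) (mem_univ 1) zero_lt_one (hg 0)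
  simp only [slope_def_field, zero_smul, add_zero, one_smul, sub_zero, div_one, w,
    add_sub_cancel] at this
  rw [Hp, inner_gradient_left]
  linarith

theorem inner_eq_lag_add_iff (hH : IsTonelli H) (x p v : E n) :
    ⟪p, v⟫ = Lag H x v + H x p ↔ v = Hp H x p := by
  constructor
  · intro heq
    have hmax : IsLocalMax (fun q => ⟪v, q⟫ - H x q) p := Eventually.of_forall fun q => by
      have := hH.inner_le_lag_add x q v
      linarith [real_inner_comm v q, real_inner_comm v p]
    have hJ : HasFDerivAt (fun q => ⟪v, q⟫ - H x q) (innerSL ℝ v - fderiv ℝ (H x) p) p :=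
      (innerSL ℝ v).hasFDerivAt.sub
        ((hH.contDiff_momentum x).differentiable two_ne_zero p).hasFDerivAt
    refine ext_inner_right ℝ fun w => ?_
    rw [Hp, inner_gradient_left, ← sub_eq_zero]
    simpa using DFunLike.congr_fun (hmax.hasFDerivAt_eq_zero hJ) w
  · rintro rfl
    have : Lag H x (Hp H x p) ≤ ⟪p, Hp H x p⟫ - H x p := ciSup_le fun q => by
      have := hH.add_inner_Hp_le x p q
      rw [inner_sub_right, real_inner_comm q, real_inner_comm p] at this
      linarith
    linarith [hH.inner_le_lag_add x p (Hp H x p)]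

end IsTonelli

section Curve

variable {F : Type*} [NormedAddCommGroup F] [NormedSpace ℝ F] {γ : ℝ → F} {a b : ℝ} {K : ℝ≥0}

theorem ae_restrict_Icc_mem_Ioo (a b : ℝ) : ∀ᵐ s ∂volume.restrict (Icc a b), s ∈ Ioo a b := by
  rw [Measure.restrict_congr_set Ioo_ae_eq_Icc.symm]
  exact ae_restrict_mem measurableSet_Ioo

theorem aemeasurable_derivWithin_Icc [CompleteSpace F] [MeasurableSpace F] [BorelSpace F]
    (γ : ℝ → F) (a b : ℝ) :
    AEMeasurable (derivWithin γ (Icc a b)) (volume.restrict (Icc a b)) := by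
  refine (measurable_deriv γ).aemeasurable.congr ?_
  filter_upwards [ae_restrict_Icc_mem_Ioo a b] with s hs
  exact (derivWithin_of_mem_nhds (Icc_mem_nhds hs.1 hs.2)).symm

theorem LipschitzOnWith.norm_derivWithin_Icc_le (hγ : LipschitzOnWith K γ (Icc a b)) {s : ℝ}
    (hs : s ∈ Ioo a b) : ‖derivWithin γ (Icc a b) s‖ ≤ K := by
  rw [derivWithin_of_mem_nhds (Icc_mem_nhds hs.1 hs.2)]
  exact norm_deriv_le_of_lipschitzOn (Icc_mem_nhds hs.1 hs.2) hγ

theorem LipschitzOnWith.ae_hasDerivAt_derivWithin_Icc [FiniteDimensional ℝ F]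
    (hγ : LipschitzOnWith K γ (Icc a b)) :
    ∀ᵐ s ∂volume.restrict (Icc a b), HasDerivAt γ (derivWithin γ (Icc a b) s) s := by
  filter_upwards [ae_restrict_Icc_mem_Ioo a b,
    ae_restrict_of_ae hγ.ae_differentiableWithinAt_of_mem] with s hs hdiff
  have hnhds := Icc_mem_nhds hs.1 hs.2
  rw [derivWithin_of_mem_nhds hnhds]
  exact ((hdiff (Ioo_subset_Icc_self hs)).differentiableAt hnhds).hasDerivAt

end Curve

section EnergyIdentity

variable {κ K : ℝ≥0} {φ : E n → ℝ} {P : E n → E n} {γ : ℝ → E n} {a b : ℝ}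

theorem sub_eq_integral_inner_of_mem_superdiff (hφ : LipschitzWith κ φ)
    (hP : ∀ x, P x ∈ superdiff φ x) (hab : a ≤ b) (hγ : LipschitzOnWith K γ (Icc a b)) :
    φ (γ b) - φ (γ a) = ∫ s in Icc a b, ⟪P (γ s), derivWithin γ (Icc a b) s⟫ := by
  have hφγ : LipschitzOnWith (κ * K) (fun s => φ (γ s)) (uIcc a b) := by
    rw [uIcc_of_le hab]
    exact hφ.comp_lipschitzOnWith hγ
  have hac := hφγ.absolutelyContinuousOnInterval
  rw [← hac.integral_deriv_eq_sub, intervalIntegral.integral_of_le hab,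
    ← integral_Icc_eq_integral_Ioc]
  refine integral_congr_ae ?_
  filter_upwards [hγ.ae_hasDerivAt_derivWithin_Icc, ae_restrict_of_ae hac.ae_differentiableAt,
    ae_restrict_mem measurableSet_Icc] with s hγs hφγs hs
  rw [← uIcc_of_le hab] at hs
  exact hγs.eq_inner_of_mem_superdiff (hφγs hs).hasDerivAt (hP _)

theorem norm_inner_derivWithin_Icc_le (hP : ∀ x, ‖P x‖ ≤ κ) (hγ : LipschitzOnWith K γ (Icc a b))
    {s : ℝ} (hs : s ∈ Ioo a b) : ‖⟪P (γ s), derivWithin γ (Icc a b) s⟫‖ ≤ κ * K :=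
  (norm_inner_le_norm _ _).trans
    (mul_le_mul (hP _) (hγ.norm_derivWithin_Icc_le hs) (norm_nonneg _) κ.2)

theorem integrableOn_inner_derivWithin_Icc (hPm : Measurable P) (hP : ∀ x, ‖P x‖ ≤ κ)
    (hγ : LipschitzOnWith K γ (Icc a b)) :
    IntegrableOn (fun s => ⟪P (γ s), derivWithin γ (Icc a b) s⟫) (Icc a b) := by
  refine Integrable.of_bound ?_ (κ * K) ?_
  · exact ((hPm.comp_aemeasurable (hγ.continuousOn.aemeasurable measurableSet_Icc)).inner
      (aemeasurable_derivWithin_Icc γ a b)).aestronglyMeasurable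
  · filter_upwards [ae_restrict_Icc_mem_Ioo a b] with s hs
    exact norm_inner_derivWithin_Icc_le hP hγ hs

theorem IsTonelli.integrableOn_lag_add {H : E n → E n → ℝ} (hH : IsTonelli H)
    (hPm : Measurable P) (hP : ∀ x, ‖P x‖ ≤ κ) (hγ : LipschitzOnWith K γ (Icc a b)) :
    IntegrableOn (fun s => Lag H (γ s) (derivWithin γ (Icc a b) s) + H (γ s) (P (γ s)))
      (Icc a b) := by
  have hγm : AEMeasurable γ (volume.restrict (Icc a b)) :=
    hγ.continuousOn.aemeasurable measurableSet_Icc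
  have hHc : Continuous fun q : E n × E n => H q.1 q.2 := hH.smooth.continuous
  obtain ⟨B, hB⟩ := hH.exists_lag_le K.2
  obtain ⟨M, hM⟩ := ((isCompact_Icc.image_of_continuousOn hγ.continuousOn).prod
    (isCompact_closedBall (0 : E n) κ)).bddAbove_image hHc.continuousOn
  refine Integrable.of_bound ?_ (κ * K + |B + M|) ?_
  · have hγ' := aemeasurable_derivWithin_Icc γ a b
    have hPγ := hPm.comp_aemeasurable hγm
    exact ((hH.measurable_lag.comp_aemeasurable (hγm.prodMk hγ')).add
      (hHc.measurable.comp_aemeasurable (hγm.prodMk hPγ))).aestronglyMeasurable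
  · filter_upwards [ae_restrict_Icc_mem_Ioo a b] with s hs
    have hinner := norm_inner_derivWithin_Icc_le hP hγ hs
    have hlag := hB (γ s) _ (hγ.norm_derivWithin_Icc_le hs)
    have hHs : H (γ s) (P (γ s)) ≤ M := hM ⟨(γ s, P (γ s)),
      ⟨mem_image_of_mem γ (Ioo_subset_Icc_self hs), by simpa using hP (γ s)⟩, rfl⟩
    have hFY := hH.inner_le_lag_add (γ s) (P (γ s)) (derivWithin γ (Icc a b) s)
    rw [Real.norm_eq_abs] at hinner ⊢
    rw [abs_le] at hinner ⊢
    constructor <;> linarith [le_abs_self (B + M), abs_nonneg (B + M)]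

end EnergyIdentity

theorem stmt3_general (κ : ℝ≥0) (φ : E n → ℝ)
    (hφLip : LipschitzWith κ φ)
    (H : E n → E n → ℝ) (hH : IsTonelli H)
    (pSel : E n → E n) (hmeas : Measurable pSel) (hsel : ∀ x, pSel x ∈ superdiff φ x)
    (T : ℝ) (hT : 0 < T) (γ : ℝ → E n) (K : ℝ≥0)
    (hγ : LipschitzOnWith K γ (Set.Icc 0 T)) :
    (φ (γ T) - φ (γ 0) ≤
      ∫ s in (0:ℝ)..T,
        (Lag H (γ s) (derivWithin γ (Set.Icc 0 T) s) + H (γ s) (pSel (γ s)))) ∧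
    ((φ (γ T) - φ (γ 0) =
      ∫ s in (0:ℝ)..T,
        (Lag H (γ s) (derivWithin γ (Set.Icc 0 T) s) + H (γ s) (pSel (γ s)))) ↔
      ∀ᵐ s ∂(volume.restrict (Set.Icc 0 T)),
        derivWithin γ (Set.Icc 0 T) s = Hp H (γ s) (pSel (γ s))) := by
  have hPκ (x : E n) : ‖pSel x‖ ≤ κ := norm_le_of_mem_superdiff hφLip (hsel x)
  have hI := integrableOn_inner_derivWithin_Icc hmeas hPκ hγ
  have hW := hH.integrableOn_lag_add hmeas hPκ hγ
  have hFY (s : ℝ) := hH.inner_le_lag_add (γ s) (pSel (γ s)) (derivWithin γ (Icc 0 T) s)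
  rw [intervalIntegral.integral_of_le hT.le, ← integral_Icc_eq_integral_Ioc,
    sub_eq_integral_inner_of_mem_superdiff hφLip hsel hT.le hγ]
  refine ⟨setIntegral_mono hI hW hFY, ?_⟩
  rw [integral_eq_iff_of_ae_le hI hW (Eventually.of_forall hFY)]
  exact eventually_congr (Eventually.of_forall fun s => hH.inner_eq_lag_add_iff _ _ _)

/-- Fundamental energy inequality for a measurable selection `p` of `D⁺φ` along a
Lipschitz curve `γ`, with equality iff `γ' = H_p(γ, p(γ))` a.e. -/
theorem stmt3 (C : ℝ) (hC : 0 ≤ C) (κ : ℝ≥0) (φ : E n → ℝ)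
    (hφ : Semiconcave C φ) (hφLip : LipschitzWith κ φ)
    (H : E n → E n → ℝ) (hH : IsTonelli H)
    (pSel : E n → E n) (hmeas : Measurable pSel) (hsel : ∀ x, pSel x ∈ superdiff φ x)
    (T : ℝ) (hT : 0 < T) (γ : ℝ → E n) (K : ℝ≥0)
    (hγ : LipschitzOnWith K γ (Set.Icc 0 T)) :
    (φ (γ T) - φ (γ 0) ≤
      ∫ s in (0:ℝ)..T,
        (Lag H (γ s) (derivWithin γ (Set.Icc 0 T) s) + H (γ s) (pSel (γ s)))) ∧
    ((φ (γ T) - φ (γ 0) =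
      ∫ s in (0:ℝ)..T,
        (Lag H (γ s) (derivWithin γ (Set.Icc 0 T) s) + H (γ s) (pSel (γ s)))) ↔
      ∀ᵐ s ∂(volume.restrict (Set.Icc 0 T)),
        derivWithin γ (Set.Icc 0 T) s = Hp H (γ s) (pSel (γ s))) :=
  stmt3_general κ φ hφLip H hH pSel hmeas hsel T hT γ K hγ

end
end

section
/- Let φ : ℝ^n → ℝ be C-semiconcave and let H be a Tonelli Hamiltonian. Then for every x ∈ ℝ^n the function p ↦ H(x,p) attains a unique minimum p♯(x) over the nonempty compact convex set D⁺φ(x); the map x ↦ p♯(x) is Borel measurable; and the function x ↦ H(x, p♯(x)) is lower semicontinuous on ℝ^n. -/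
open MeasureTheory Set Filter Topology
open scoped RealInnerProductSpace NNReal

noncomputable section

variable {n : ℕ}

/-- `ps` is the minimal energy selection of `D⁺φ` for the pair `(φ, H)`. -/
def MinSel (φ : E n → ℝ) (H : E n → E n → ℝ) (ps : E n → E n) : Prop :=
  ∀ x, ps x ∈ superdiff φ x ∧ ∀ q ∈ superdiff φ x, H x (ps x) ≤ H x q

/-!
With `g := φ - (C/2)‖·‖²` concave, a Fréchet supergradient of `φ` at `x` is the same as a
global quadratic upper support `φ y ≤ φ x + ⟪p, y - x⟫ + (C/2)‖y - x‖²`: along a segment the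
concavity of `g` propagates the infinitesimal inequality to a global one. Such supports exist by
separating `(x, g x)` from the open strict hypograph of `g`. This closed description makes the
graph of `D⁺φ` closed and locally bounded, so `D⁺φ(x)` is compact, and `H x` is strictly convex,
whence the unique minimiser. If `H(x, p♯ x) > y`, the compact set
`{(z, p) : z near x, p ∈ D⁺φ(z), H(z, p) ≤ y}` projects to a closed set missing `x`: this is the
lower semicontinuity. Finally the graph of `p♯` is the Borel set
`{(x, p) : p ∈ D⁺φ(x), H(x, p) ≤ H(x, p♯ x)}`, and by Lusin–Souslin a map between Polish spaces
with Borel graph is Borel.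
-/

theorem strictConvexOn_univ_of_iteratedFDeriv_two_pos {F : Type*} [NormedAddCommGroup F]
    [NormedSpace ℝ F] {f : F → ℝ} (hf : ContDiff ℝ 2 f)
    (hpos : ∀ p v, v ≠ 0 → 0 < iteratedFDeriv ℝ 2 f p ![v, v]) : StrictConvexOn ℝ univ f := by
  refine ⟨convex_univ, fun p _ q _ hpq a b ha hb hab => ?_⟩
  set L := ContinuousLinearMap.toSpanSingleton ℝ (q - p)
  have hψ : ∀ t, deriv^[2] (fun t : ℝ => f (p + t • (q - p))) t
      = iteratedFDeriv ℝ 2 f (p + t • (q - p)) ![q - p, q - p] := by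
    intro t
    have hcomp := L.iteratedFDeriv_comp_right (f := fun w => f (p + w))
      (hf.comp (contDiff_const.add contDiff_id)) t le_rfl
    rw [← iteratedDeriv_eq_iterate, iteratedDeriv_eq_iteratedFDeriv]
    change iteratedFDeriv ℝ 2 ((fun w => f (p + w)) ∘ L) t _ = _
    rw [hcomp, iteratedFDeriv_comp_add_left]
    simp only [L, ContinuousMultilinearMap.compContinuousLinearMap_apply,
      ContinuousLinearMap.toSpanSingleton_apply, one_smul]
    congr 1
    ext i
    fin_cases i <;> rfl
  have hconv := strictConvexOn_univ_of_deriv2_pos (f := fun t : ℝ => f (p + t • (q - p)))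
    (hf.continuous.comp (by fun_prop)) fun t => hψ t ▸ hpos _ _ (sub_ne_zero.2 hpq.symm)
  have := hconv.2 (mem_univ 0) (mem_univ 1) zero_ne_one ha hb hab
  have hb' : a • (0 : ℝ) + b • 1 = b := by simp
  have hpt : p + b • (q - p) = a • p + b • q := by
    rw [eq_sub_of_add_eq hab]; module
  simpa [hb', hpt] using this

theorem StrictConvexOn.existsUnique_isMinOn {F : Type*} [AddCommGroup F] [Module ℝ F]
    [TopologicalSpace F] {f : F → ℝ} {s : Set F} (hf : StrictConvexOn ℝ s f)
    (hcont : ContinuousOn f s) (hs : IsCompact s) (hne : s.Nonempty) :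
    ∃! p, p ∈ s ∧ IsMinOn f s p := by
  obtain ⟨p, hp, hmin⟩ := hs.exists_isMinOn hne hcont
  exact ⟨p, ⟨hp, hmin⟩, fun q hq => hf.eq_of_isMinOn hq.2 hmin hq.1 hp⟩

theorem ConcaveOn.exists_forall_le_add_clm {F : Type*} [NormedAddCommGroup F] [NormedSpace ℝ F]
    {g : F → ℝ} (hg : ConcaveOn ℝ univ g) (hcont : Continuous g) (x : F) :
    ∃ ℓ : StrongDual ℝ F, ∀ y, g y ≤ g x + ℓ (y - x) := by
  set T : Set (F × ℝ) := {z | z.2 < g z.1}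
  have hT : Convex ℝ T := by simpa [T] using hg.convex_strict_hypograph
  obtain ⟨f, hf⟩ := geometric_hahn_banach_point_open hT
    (isOpen_lt continuous_snd (hcont.comp continuous_fst)) (x := (x, g x)) (lt_irrefl (g x))
  set ℓ := f.comp (ContinuousLinearMap.inl ℝ F ℝ)
  set c := f (0, 1)
  have hf_apply : ∀ z t, f (z, t) = ℓ z + t * c := fun z t => by
    rw [← f.comp_inl_add_comp_inr, ← smul_eq_mul t c, ← map_smul]
    simp [ℓ]
  have hc : c < 0 := by
    have := hf (x, g x - 1) (by simp [T])
    rw [hf_apply, hf_apply] at this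
    linarith
  refine ⟨(-c)⁻¹ • ℓ, fun y => le_of_forall_pos_lt_add fun ε hε => ?_⟩
  have := hf (y, g y - ε) (by simp [T, hε])
  rw [hf_apply, hf_apply] at this
  have key : (-c) * (g y - ε - g x) < ℓ (y - x) := by rw [map_sub]; linarith
  have := (lt_inv_mul_iff₀ (neg_pos.2 hc)).2 key
  change g y < g x + (-c)⁻¹ * ℓ (y - x) + ε
  linarith

theorem lowerSemicontinuous_of_isMinOn {X P : Type*} [TopologicalSpace X] [T2Space X]
    [TopologicalSpace P] {Γ : X → Set P}
    (hΓ : ∀ x, ∃ U ∈ 𝓝 x, IsCompact {z : X × P | z.1 ∈ U ∧ z.2 ∈ Γ z.1})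
    {f : X → P → ℝ} (hf : Continuous fun z : X × P => f z.1 z.2) {s : X → P}
    (hs : ∀ x, s x ∈ Γ x) (hmin : ∀ x, IsMinOn (f x) (Γ x) (s x)) :
    LowerSemicontinuous fun x => f x (s x) := by
  intro x y hy
  obtain ⟨U, hU, hK⟩ := hΓ x
  set B := Prod.fst '' ({z : X × P | z.1 ∈ U ∧ z.2 ∈ Γ z.1} ∩ {z | f z.1 z.2 ≤ y})
  have hB : IsClosed B :=
    ((hK.inter_right (isClosed_le hf continuous_const)).image continuous_fst).isClosed
  have hxB : x ∉ B := by
    rintro ⟨⟨x', p⟩, ⟨⟨-, hp⟩, hle⟩, rfl⟩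
    exact (hy.trans_le (hmin x' hp)).not_ge hle
  filter_upwards [hU, hB.isOpen_compl.mem_nhds hxB] with z hzU hzB
  by_contra! h
  exact hzB ⟨(z, s z), ⟨⟨hzU, hs z⟩, h⟩, rfl⟩

theorem measurable_of_measurableSet_graph {X Y : Type*} [MeasurableSpace X]
    [StandardBorelSpace X] [MeasurableSpace Y] [StandardBorelSpace Y] {f : X → Y}
    (hf : MeasurableSet {z : X × Y | z.2 = f z.1}) : Measurable f := by
  intro s hs
  have hpre : f ⁻¹' s = Prod.fst '' ({z : X × Y | z.2 = f z.1} ∩ Prod.snd ⁻¹' s) := by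
    ext x
    simp
  rw [hpre]
  exact (hf.inter (measurable_snd hs)).image_of_measurable_injOn measurable_fst
    fun a ha b hb hab => Prod.ext hab (ha.1.trans (hab ▸ hb.1.symm))

theorem measurable_of_isMinOn {X P : Type*} [TopologicalSpace X] [PolishSpace X]
    [MeasurableSpace X] [BorelSpace X] [TopologicalSpace P] [PolishSpace P] [MeasurableSpace P]
    [BorelSpace P] {Γ : X → Set P} (hΓ : IsClosed {z : X × P | z.2 ∈ Γ z.1})
    (hloc : ∀ x, ∃ U ∈ 𝓝 x, IsCompact {z : X × P | z.1 ∈ U ∧ z.2 ∈ Γ z.1})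
    {f : X → P → ℝ} (hf : Continuous fun z : X × P => f z.1 z.2) {s : X → P}
    (hs : ∀ x, s x ∈ Γ x) (hmin : ∀ x, IsMinOn (f x) (Γ x) (s x))
    (huniq : ∀ x p, p ∈ Γ x → IsMinOn (f x) (Γ x) p → p = s x) : Measurable s := by
  have hgraph : {z : X × P | z.2 = s z.1} =
      {z | z.2 ∈ Γ z.1} ∩ {z | f z.1 z.2 ≤ f z.1 (s z.1)} := by
    ext ⟨x, p⟩
    refine ⟨?_, fun ⟨hp, hle⟩ => huniq x p hp (isMinOn_iff.2 fun q hq => hle.trans (hmin x hq))⟩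
    rintro (rfl : p = s x)
    exact ⟨hs x, le_refl (f x (s x))⟩
  apply measurable_of_measurableSet_graph
  rw [hgraph]
  exact hΓ.measurableSet.inter (measurableSet_le hf.measurable
    ((lowerSemicontinuous_of_isMinOn hloc hf hs hmin).measurable.comp measurable_fst))

theorem convex_superdiff (φ : E n → ℝ) (x : E n) : Convex ℝ (superdiff φ x) := by
  intro p hp q hq a b ha hb hab ε hε
  filter_upwards [hp ε hε, hq ε hε] with y hpy hqy
  calc φ y - φ x - ⟪a • p + b • q, y - x⟫
      = a * (φ y - φ x - ⟪p, y - x⟫) + b * (φ y - φ x - ⟪q, y - x⟫) := by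
        rw [inner_add_left, real_inner_smul_left, real_inner_smul_left]
        linear_combination (φ y - φ x) * hab.symm
    _ ≤ a * (ε * ‖y - x‖) + b * (ε * ‖y - x‖) := by gcongr
    _ = ε * ‖y - x‖ := by rw [← add_mul, hab, one_mul]

theorem mem_superdiff_of_forall_le {φ : E n → ℝ} {x p : E n}
    (h : ∀ y, φ y ≤ φ x + ⟪p, y - x⟫) : p ∈ superdiff φ x := fun ε hε =>
  Eventually.of_forall fun y => by nlinarith [h y, norm_nonneg (y - x)]

theorem add_mem_superdiff_of_hasGradientAt {φ ψ : E n → ℝ} {x p ψ' : E n}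
    (hp : p ∈ superdiff φ x) (hψ : HasGradientAt ψ ψ' x) :
    p + ψ' ∈ superdiff (φ + ψ) x := by
  intro ε hε
  filter_upwards [hp (ε / 2) (half_pos hε),
    (hasGradientAt_iff_isLittleO.1 hψ).def (half_pos hε)] with y hφy hψy
  rw [Real.norm_eq_abs] at hψy
  simp only [Pi.add_apply, inner_add_left]
  linarith [le_abs_self (ψ y - ψ x - ⟪ψ', y - x⟫)]

theorem hasGradientAt_const_mul_norm_sq {F : Type*} [NormedAddCommGroup F]
    [InnerProductSpace ℝ F] [CompleteSpace F] (c : ℝ) (x : F) :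
    HasGradientAt (fun y => c / 2 * ‖y‖ ^ 2) (c • x) x := by
  rw [hasGradientAt_iff_hasFDerivAt]
  refine ((hasStrictFDerivAt_norm_sq x).hasFDerivAt.const_mul (c / 2)).congr_fderiv ?_
  ext v
  simp only [smul_apply, coe_innerSL_apply, nsmul_eq_mul, Nat.cast_ofNat, smul_eq_mul, map_smul,
    InnerProductSpace.toDual_apply_apply]
  ring

theorem ConcaveOn.le_of_mem_superdiff {g : E n → ℝ} (hg : ConcaveOn ℝ univ g) {x p : E n}
    (hp : p ∈ superdiff g x) (y : E n) : g y ≤ g x + ⟪p, y - x⟫ := by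
  suffices h : ∀ ε > 0, g y - g x - ⟪p, y - x⟫ ≤ ε * ‖y - x‖ by
    have hlim : Tendsto (fun ε : ℝ => ε * ‖y - x‖) (𝓝[>] 0) (𝓝 0) :=
      tendsto_nhdsWithin_of_tendsto_nhds ((continuous_mul_const _).tendsto' 0 0 (zero_mul _))
    linarith [ge_of_tendsto hlim (eventually_nhdsWithin_of_forall h)]
  intro ε hε
  have hseg : Tendsto (fun t : ℝ => x + t • (y - x)) (𝓝[>] 0) (𝓝 x) :=
    tendsto_nhdsWithin_of_tendsto_nhds
      ((continuous_const.add (continuous_id.smul continuous_const)).tendsto' 0 x (by simp))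
  obtain ⟨t, hsmall, ht0, ht1⟩ :=
    ((hseg.eventually (hp ε hε)).and (Ioo_mem_nhdsGT one_pos)).exists
  have hconc := hg.2 (mem_univ x) (mem_univ y) (sub_nonneg.2 ht1.le) ht0.le (by ring)
  rw [show (1 - t) • x + t • y = x + t • (y - x) by module] at hconc
  simp only [add_sub_cancel_left, real_inner_smul_right, norm_smul, Real.norm_eq_abs,
    abs_of_pos ht0, smul_eq_mul] at hsmall hconc
  nlinarith

namespace Semiconcave

variable {C : ℝ} {φ : E n → ℝ}

theorem continuous (hφ : Semiconcave C φ) : Continuous φ := by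
  have hg : Continuous fun x : E n => φ x - C / 2 * ‖x‖ ^ 2 :=
    continuousOn_univ.1 (hφ.continuousOn isOpen_univ)
  exact (hg.add (continuous_const.mul (continuous_norm.pow 2))).congr fun x => sub_add_cancel _ _

theorem mem_superdiff_iff (hφ : Semiconcave C φ) {x p : E n} :
    p ∈ superdiff φ x ↔ ∀ y, φ y ≤ φ x + ⟪p, y - x⟫ + C / 2 * ‖y - x‖ ^ 2 := by
  set g : E n → ℝ := fun y => φ y - C / 2 * ‖y‖ ^ 2
  have hid : ∀ y, g y - (g x + ⟪p - C • x, y - x⟫) =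
      φ y - (φ x + ⟪p, y - x⟫ + C / 2 * ‖y - x‖ ^ 2) := fun y => by
    simp only [g, inner_sub_left, real_inner_smul_left, norm_sub_sq_real, inner_sub_right,
      real_inner_self_eq_norm_sq, real_inner_comm x y]
    ring
  constructor
  · intro hp y
    have hg : p - C • x ∈ superdiff g x := by
      convert add_mem_superdiff_of_hasGradientAt hp (hasGradientAt_const_mul_norm_sq (-C) x)
        using 1
      · congr 1; funext y; simp only [g, Pi.add_apply]; ring
      · rw [neg_smul, sub_eq_add_neg]
    linarith [hid y, ConcaveOn.le_of_mem_superdiff (g := g) hφ hg y]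
  · intro h
    have hg : p - C • x ∈ superdiff g x :=
      mem_superdiff_of_forall_le fun y => by linarith [hid y, h y]
    convert add_mem_superdiff_of_hasGradientAt hg (hasGradientAt_const_mul_norm_sq C x) using 1
    · congr 1; funext y; simp only [g, Pi.add_apply]; ring
    · rw [sub_add_cancel]

theorem superdiff_nonempty (hφ : Semiconcave C φ) (x : E n) : (superdiff φ x).Nonempty := by
  obtain ⟨ℓ, hℓ⟩ := ConcaveOn.exists_forall_le_add_clm hφ
    (hφ.continuous.sub (continuous_const.mul (continuous_norm.pow 2))) x
  refine ⟨(InnerProductSpace.toDual ℝ (E n)).symm ℓ + C • x, hφ.mem_superdiff_iff.2 fun y => ?_⟩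
  have := hℓ y
  simp only [inner_add_left, InnerProductSpace.toDual_symm_apply, real_inner_smul_left] at this ⊢
  rw [inner_sub_right, real_inner_self_eq_norm_sq, norm_sub_sq_real, real_inner_comm]
  linarith

theorem isClosed_setOf_mem_superdiff (hφ : Semiconcave C φ) :
    IsClosed {z : E n × E n | z.2 ∈ superdiff φ z.1} := by
  have hc := hφ.continuous
  simp only [hφ.mem_superdiff_iff, ofPred_forall]
  exact isClosed_iInter fun y => isClosed_le continuous_const (by fun_prop)

theorem exists_norm_le_of_isCompact (hφ : Semiconcave C φ) {K : Set (E n)} (hK : IsCompact K) :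
    ∃ R, ∀ y ∈ K, ∀ p ∈ superdiff φ y, ‖p‖ ≤ R := by
  obtain ⟨M, hM⟩ := (hK.cthickening (r := 1)).exists_bound_of_continuousOn
    hφ.continuous.continuousOn
  refine ⟨2 * M + |C| / 2, fun y hy p hp => ?_⟩
  have hMy := abs_le.1 (hM y (Metric.self_subset_cthickening K hy))
  rcases eq_or_ne p 0 with rfl | hp0
  · simp only [norm_zero]
    linarith [abs_nonneg C]
  -- Testing the quadratic support at `z` gives `‖p‖ ≤ φ y - φ z + C / 2`.
  set z := y - ‖p‖⁻¹ • p
  have hzy : z - y = -(‖p‖⁻¹ • p) := by simp [z]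
  have hnorm : ‖z - y‖ = 1 := by
    rw [hzy, norm_neg, norm_smul, norm_inv, norm_norm, inv_mul_cancel₀ (norm_ne_zero_iff.2 hp0)]
  have hinner : ⟪p, z - y⟫ = -‖p‖ := by
    rw [hzy, inner_neg_right, real_inner_smul_right, real_inner_self_eq_norm_sq]
    field_simp
  have hMz := abs_le.1
    (hM z (Metric.mem_cthickening_of_dist_le z y 1 K hy (by rw [dist_eq_norm, hnorm])))
  have := hφ.mem_superdiff_iff.1 hp z
  rw [hinner, hnorm] at this
  linarith [le_abs_self C]

theorem isCompact_superdiff (hφ : Semiconcave C φ) (x : E n) : IsCompact (superdiff φ x) := by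
  obtain ⟨R, hR⟩ := hφ.exists_norm_le_of_isCompact (isCompact_singleton (x := x))
  refine (isCompact_closedBall 0 R).of_isClosed_subset
    (hφ.isClosed_setOf_mem_superdiff.preimage (Continuous.prodMk_right x)) fun p hp => ?_
  simpa using hR x rfl p hp

theorem isCompact_setOf_mem_superdiff (hφ : Semiconcave C φ) {K : Set (E n)} (hK : IsCompact K) :
    IsCompact {z : E n × E n | z.1 ∈ K ∧ z.2 ∈ superdiff φ z.1} := by
  obtain ⟨R, hR⟩ := hφ.exists_norm_le_of_isCompact hK
  refine (hK.prod (isCompact_closedBall 0 R)).of_isClosed_subset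
    ((hK.isClosed.preimage continuous_fst).inter hφ.isClosed_setOf_mem_superdiff)
    fun z hz => ⟨hz.1, by simpa using hR _ hz.1 _ hz.2⟩

end Semiconcave

theorem stmt5_general (C : ℝ) (φ : E n → ℝ) (hφ : Semiconcave C φ)
    (H : E n → E n → ℝ) (hH : IsTonelli H) :
    (∀ x : E n, (superdiff φ x).Nonempty ∧ IsCompact (superdiff φ x) ∧
      Convex ℝ (superdiff φ x) ∧
      ∃! p : E n, p ∈ superdiff φ x ∧ ∀ q ∈ superdiff φ x, H x p ≤ H x q) ∧
    ∀ ps : E n → E n, MinSel φ H ps →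
      Measurable ps ∧ LowerSemicontinuous (fun x => H x (ps x)) := by
  have hHx (x : E n) : ContDiff ℝ 2 (H x) :=
    hH.smooth.comp (contDiff_const.prodMk contDiff_id)
  have hmin (x : E n) : ∃! p, p ∈ superdiff φ x ∧ IsMinOn (H x) (superdiff φ x) p :=
    ((strictConvexOn_univ_of_iteratedFDeriv_two_pos (hHx x) (hH.posdef x)).subset
      (subset_univ _) (convex_superdiff φ x)).existsUnique_isMinOn
      (hHx x).continuous.continuousOn (hφ.isCompact_superdiff x) (hφ.superdiff_nonempty x)
  refine ⟨fun x => ⟨hφ.superdiff_nonempty x, hφ.isCompact_superdiff x,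
    convex_superdiff φ x, hmin x⟩, fun ps hps => ?_⟩
  have hloc (x : E n) :
      ∃ U ∈ 𝓝 x, IsCompact {z : E n × E n | z.1 ∈ U ∧ z.2 ∈ superdiff φ z.1} :=
    ⟨_, Metric.closedBall_mem_nhds x one_pos,
      hφ.isCompact_setOf_mem_superdiff (isCompact_closedBall x 1)⟩
  exact ⟨measurable_of_isMinOn hφ.isClosed_setOf_mem_superdiff hloc hH.smooth.continuous
      (fun x => (hps x).1) (fun x => (hps x).2)
      fun x p hp hpmin => (hmin x).unique ⟨hp, hpmin⟩ (hps x),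
    lowerSemicontinuous_of_isMinOn hloc hH.smooth.continuous (fun x => (hps x).1)
      (fun x => (hps x).2)⟩

/-- For a semiconcave `φ` and a Tonelli `H`, the superdifferential is a nonempty
compact convex set over which `H(x,·)` attains a unique minimum; the minimal energy
selection is Borel measurable and `x ↦ H(x, p♯(x))` is lower semicontinuous. -/
theorem stmt5 (C : ℝ) (hC : 0 ≤ C) (φ : E n → ℝ) (hφ : Semiconcave C φ)
    (H : E n → E n → ℝ) (hH : IsTonelli H) :
    (∀ x : E n, (superdiff φ x).Nonempty ∧ IsCompact (superdiff φ x) ∧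
      Convex ℝ (superdiff φ x) ∧
      ∃! p : E n, p ∈ superdiff φ x ∧ ∀ q ∈ superdiff φ x, H x p ≤ H x q) ∧
    ∀ ps : E n → E n, MinSel φ H ps →
      Measurable ps ∧ LowerSemicontinuous (fun x => H x (ps x)) :=
  stmt5_general C φ hφ H hH

end
end

section
/- Let H : ℝ^n × ℝ^n → ℝ be a Tonelli Hamiltonian, ℤ^n-periodic in the x variable, and let u : ℝ^n → ℝ be a ℤ^n-periodic, Lipschitz, semiconcave weak KAM solution with critical value c, i.e. T⁻_t u = u − c·t for all t ≥ 0. Then T⁻_t(T⁺_t u) = u on ℝ^n for every t ≥ 0. -/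
open MeasureTheory Set Filter Topology intervalIntegral
open scoped RealInnerProductSpace NNReal ENNReal

noncomputable section

variable {n : ℕ}

/-- The integer vector `k` viewed as an element of `E n`. -/
def intVec (k : Fin n → ℤ) : E n :=
  (WithLp.equiv 2 (Fin n → ℝ)).symm (fun i => (k i : ℝ))

/-- `f` is `ℤⁿ`-periodic. -/
def ZPeriodic {α : Type*} (f : E n → α) : Prop :=
  ∀ (x : E n) (k : Fin n → ℤ), f (x + intVec k) = f x

/-- The fundamental solution `A_t(x,y)`: the infimum of the action over absolutely
continuous curves joining `x` to `y` in time `t`. -/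
def fundSol (L : E n → E n → ℝ) (t : ℝ) (x y : E n) : ℝ :=
  sInf {r : ℝ | ∃ ξ ξ' : ℝ → E n, ξ 0 = x ∧ ξ t = y ∧
    IntervalIntegrable ξ' MeasureTheory.volume 0 t ∧
    (∀ s ∈ Set.Icc 0 t, ξ s = x + ∫ u in (0:ℝ)..s, ξ' u) ∧
    r = ∫ s in (0:ℝ)..t, L (ξ s) (ξ' s)}

/-- The negative Lax–Oleinik operator `T⁻_t` (with `T⁻_0 = id`). -/
def Tminus (L : E n → E n → ℝ) (t : ℝ) (φ : E n → ℝ) (x : E n) : ℝ :=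
  if t ≤ 0 then φ x else ⨅ y : E n, (φ y + fundSol L t y x)

/-- The positive Lax–Oleinik operator `T⁺_t` (with `T⁺_0 = id`). -/
def Tplus (L : E n → E n → ℝ) (t : ℝ) (φ : E n → ℝ) (x : E n) : ℝ :=
  if t ≤ 0 then φ x else ⨆ y : E n, (φ y - fundSol L t x y)

/-- `φ` is a weak KAM solution with critical value `c`. -/
def WeakKAM (L : E n → E n → ℝ) (c : ℝ) (φ : E n → ℝ) : Prop :=
  ∀ t ≥ (0:ℝ), ∀ x, Tminus L t φ x = φ x - c * t

/-- The absolutely continuous curve `γ`, with a.e. derivative `γ'`, is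
`(φ,c)`-calibrated on `[a,b]`. -/
def IsCalibratedOn (L : E n → E n → ℝ) (c : ℝ) (φ : E n → ℝ) (a b : ℝ)
    (γ γ' : ℝ → E n) : Prop :=
  IntervalIntegrable γ' MeasureTheory.volume a b ∧
  (∀ s ∈ Set.Icc a b, γ s = γ a + ∫ u in a..s, γ' u) ∧
  ∀ s₁ ∈ Set.Icc a b, ∀ s₂ ∈ Set.Icc a b, s₁ ≤ s₂ →
    φ (γ s₂) - φ (γ s₁) = (∫ s in s₁..s₂, L (γ s) (γ' s)) + c * (s₂ - s₁)

/-- The cut time `τ_φ(x)` of `φ` at `x` (valued in `ℝ≥0∞`). -/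
def cutTime (L : E n → E n → ℝ) (c : ℝ) (φ : E n → ℝ) (x : E n) : ℝ≥0∞ :=
  ⨆ t ∈ {t : ℝ | 0 ≤ t ∧ ∃ γ γ' : ℝ → E n, γ 0 = x ∧ IsCalibratedOn L c φ 0 t γ γ'},
    ENNReal.ofReal t

/-- The cut locus of `φ`. -/
def cutLocus (L : E n → E n → ℝ) (c : ℝ) (φ : E n → ℝ) : Set (E n) :=
  {x | cutTime L c φ x = 0}

/-!
The two inequalities are formal consequences of the definitions of `T⁻_t` and `T⁺_t` as an
infimum and a supremum: `u x - A_t(y,x) ≤ T⁺_t u (y)` for every `y` gives `u ≤ T⁻_t T⁺_t u`, and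
the weak KAM identity `u z - c t ≤ u y + A_t(y,z)` gives `T⁺_t u ≤ u + c t`, hence
`T⁻_t T⁺_t u ≤ T⁻_t u + c t = u`. Periodicity makes `u` and `H(·,0)` bounded, so that
`A_t ≥ -t sup H(·,0)` is bounded below and `A_t(y,y) ≤ t sup L(·,0)` above; this is what keeps
every infimum and supremum involved finite.
-/

def unitCube (n : ℕ) : Set (E n) := {y | ∀ i, y i ∈ Icc (0 : ℝ) 1}

theorem isCompact_unitCube : IsCompact (unitCube n) := by
  have : unitCube n = (EuclideanSpace.equiv (Fin n) ℝ).toHomeomorph ⁻¹' Icc 0 1 := by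
    ext y
    simp [unitCube, Pi.le_def, forall_and]
  rw [this]
  exact (EuclideanSpace.equiv (Fin n) ℝ).toHomeomorph.isCompact_preimage.mpr isCompact_Icc

theorem exists_add_intVec_mem_unitCube (x : E n) : ∃ k, x + intVec k ∈ unitCube n := by
  refine ⟨fun i => -⌊x i⌋, fun i => ?_⟩
  have hx : (x + intVec fun i => -⌊x i⌋) i = x i - ⌊x i⌋ := by simp [intVec, sub_eq_add_neg]
  rw [hx]
  exact ⟨sub_nonneg.mpr (Int.floor_le _), (sub_lt_iff_lt_add'.mpr (Int.lt_floor_add_one _)).le⟩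

theorem ZPeriodic.range_eq_image_unitCube {α : Type*} {f : E n → α} (hf : ZPeriodic f) :
    range f = f '' unitCube n := by
  refine (image_subset_range _ _).antisymm' ?_
  rintro _ ⟨x, rfl⟩
  obtain ⟨k, hk⟩ := exists_add_intVec_mem_unitCube x
  exact ⟨x + intVec k, hk, hf x k⟩

theorem ZPeriodic.isCompact_range {α : Type*} [TopologicalSpace α] {f : E n → α}
    (hf : ZPeriodic f) (hc : Continuous f) : IsCompact (range f) :=
  hf.range_eq_image_unitCube ▸ isCompact_unitCube.image hc

section Lagrangian

variable {H : E n → E n → ℝ}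

theorem IsTonelli.continuous_zero (hH : IsTonelli H) : Continuous fun x => H x 0 :=
  hH.smooth.continuous.comp (continuous_id.prodMk continuous_const)

theorem IsTonelli.bddAbove_range_inner_sub_s16 (hH : IsTonelli H) (x v : E n) :
    BddAbove (range fun p => ⟪p, v⟫ - H x p) := by
  obtain ⟨B, hB⟩ := hH.superlinear ‖v‖ (norm_nonneg v)
  refine ⟨B, ?_⟩
  rintro _ ⟨p, rfl⟩
  have := real_inner_le_norm p v
  nlinarith [hB x p]

theorem IsTonelli.neg_le_Lag (hH : IsTonelli H) (x v : E n) : -H x 0 ≤ Lag H x v := by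
  simpa [Lag] using le_ciSup (hH.bddAbove_range_inner_sub_s16 x v) 0

theorem Lag_zero_le {x : E n} {B : ℝ} (hB : ∀ p, -B ≤ H x p) : Lag H x 0 ≤ B :=
  ciSup_le fun p => by simpa [neg_le] using hB p

end Lagrangian

section FundamentalSolution

variable {L : E n → E n → ℝ} {t m : ℝ}

def actionSet (L : E n → E n → ℝ) (t : ℝ) (x y : E n) : Set ℝ :=
  {r | ∃ ξ ξ' : ℝ → E n, ξ 0 = x ∧ ξ t = y ∧
    IntervalIntegrable ξ' volume 0 t ∧
    (∀ s ∈ Icc 0 t, ξ s = x + ∫ u in (0:ℝ)..s, ξ' u) ∧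
    r = ∫ s in (0:ℝ)..t, L (ξ s) (ξ' s)}

theorem fundSol_eq_sInf (L : E n → E n → ℝ) (t : ℝ) (x y : E n) :
    fundSol L t x y = sInf (actionSet L t x y) := rfl

-- `min _ 0`: a non-integrable action has the junk integral `0`.
theorem min_mul_le_of_mem_actionSet (hL : ∀ x v, m ≤ L x v) (ht : 0 ≤ t) {x y : E n} {r : ℝ}
    (hr : r ∈ actionSet L t x y) : min (m * t) 0 ≤ r := by
  obtain ⟨ξ, ξ', -, -, -, -, rfl⟩ := hr
  by_cases hi : IntervalIntegrable (fun s => L (ξ s) (ξ' s)) volume 0 t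
  · refine (min_le_left _ _).trans ?_
    simpa [mul_comm] using
      integral_mono_on ht intervalIntegrable_const hi fun s _ => hL (ξ s) (ξ' s)
  · simp [integral_undef hi]

theorem min_mul_le_fundSol (hL : ∀ x v, m ≤ L x v) (ht : 0 ≤ t) (x y : E n) :
    min (m * t) 0 ≤ fundSol L t x y := by
  rw [fundSol_eq_sInf]
  rcases (actionSet L t x y).eq_empty_or_nonempty with h | h
  · simp [h]
  · exact le_csInf h fun r hr => min_mul_le_of_mem_actionSet hL ht hr

theorem fundSol_self_le (hL : ∀ x v, m ≤ L x v) (ht : 0 ≤ t) (y : E n) :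
    fundSol L t y y ≤ t * L y 0 := by
  have hconst : t * L y 0 ∈ actionSet L t y y :=
    ⟨fun _ => y, fun _ => 0, rfl, rfl, intervalIntegrable_const, by simp, by simp⟩
  exact csInf_le ⟨_, fun r hr => min_mul_le_of_mem_actionSet hL ht hr⟩ hconst

end FundamentalSolution

section LaxOleinik

variable {L : E n → E n → ℝ} {t a : ℝ} {φ : E n → ℝ}

theorem Tminus_of_pos (ht : 0 < t) (x : E n) :
    Tminus L t φ x = ⨅ y, (φ y + fundSol L t y x) :=
  if_neg ht.not_ge

theorem Tplus_of_pos (ht : 0 < t) (x : E n) :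
    Tplus L t φ x = ⨆ y, (φ y - fundSol L t x y) :=
  if_neg ht.not_ge

theorem Tminus_le (ht : 0 < t) {m : ℝ} (hφ : ∀ y, m ≤ φ y) (hA : ∀ x y, a ≤ fundSol L t x y)
    (x y : E n) : Tminus L t φ x ≤ φ y + fundSol L t y x := by
  rw [Tminus_of_pos ht]
  refine ciInf_le ⟨m + a, ?_⟩ y
  rintro _ ⟨z, rfl⟩
  exact add_le_add (hφ z) (hA z x)

theorem le_Tminus (ht : 0 < t) {x : E n} {r : ℝ} (h : ∀ y, r ≤ φ y + fundSol L t y x) :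
    r ≤ Tminus L t φ x := by
  rw [Tminus_of_pos ht]
  exact le_ciInf h

theorem le_Tplus (ht : 0 < t) {m : ℝ} (hφ : ∀ y, φ y ≤ m) (hA : ∀ x y, a ≤ fundSol L t x y)
    (x y : E n) : φ y - fundSol L t x y ≤ Tplus L t φ x := by
  rw [Tplus_of_pos ht]
  refine le_ciSup (f := fun z => φ z - fundSol L t x z) ⟨m - a, ?_⟩ y
  rintro _ ⟨z, rfl⟩
  exact sub_le_sub (hφ z) (hA x z)

theorem Tplus_le (ht : 0 < t) {x : E n} {r : ℝ} (h : ∀ y, φ y - fundSol L t x y ≤ r) :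
    Tplus L t φ x ≤ r := by
  rw [Tplus_of_pos ht]
  exact ciSup_le h

variable {c m₁ m₂ b : ℝ} {u : E n → ℝ}

theorem le_Tminus_Tplus (ht : 0 < t) (hu : ∀ y, u y ≤ m₂) (hA : ∀ x y, a ≤ fundSol L t x y)
    (x : E n) : u x ≤ Tminus L t (Tplus L t u) x :=
  le_Tminus ht fun y => sub_le_iff_le_add.mp (le_Tplus ht hu hA y x)

theorem WeakKAM.Tplus_le_add (hwk : WeakKAM L c u) (ht : 0 < t) (hu : ∀ y, m₁ ≤ u y)
    (hA : ∀ x y, a ≤ fundSol L t x y) (y : E n) : Tplus L t u y ≤ u y + c * t :=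
  Tplus_le ht fun z => by
    have := hwk t ht.le z ▸ Tminus_le ht hu hA z y
    linarith

theorem WeakKAM.Tminus_Tplus_le (hwk : WeakKAM L c u) (ht : 0 < t) (hu₁ : ∀ y, m₁ ≤ u y)
    (hu₂ : ∀ y, u y ≤ m₂) (hA : ∀ x y, a ≤ fundSol L t x y)
    (hAdiag : ∀ y, fundSol L t y y ≤ b) (x : E n) : Tminus L t (Tplus L t u) x ≤ u x := by
  have hTplus_ge : ∀ y, m₁ - b ≤ Tplus L t u y := fun y =>
    (sub_le_sub (hu₁ y) (hAdiag y)).trans (le_Tplus ht hu₂ hA y y)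
  have : Tminus L t (Tplus L t u) x - c * t ≤ Tminus L t u x :=
    le_Tminus ht fun y => by
      linarith [Tminus_le ht hTplus_ge hA x y, hwk.Tplus_le_add ht hu₁ hA y]
  linarith [hwk t ht.le x]

end LaxOleinik

theorem stmt16_general (H : E n → E n → ℝ) (hH : IsTonelli H)
    (hper : ∀ p : E n, ZPeriodic (fun x => H x p)) (c : ℝ) (u : E n → ℝ)
    (huper : ZPeriodic u) (huLip : ∃ κ : ℝ≥0, LipschitzWith κ u)
    (hwk : WeakKAM (Lag H) c u) :
    ∀ t : ℝ, 0 ≤ t → ∀ x : E n,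
      Tminus (Lag H) t (Tplus (Lag H) t u) x = u x := by
  intro t ht x
  rcases ht.eq_or_lt with rfl | ht
  · simp [Tminus, Tplus]
  obtain ⟨κ, hκ⟩ := huLip
  have hu := huper.isCompact_range hκ.continuous
  obtain ⟨m₁, hm₁⟩ := hu.bddBelow
  obtain ⟨m₂, hm₂⟩ := hu.bddAbove
  obtain ⟨M, hM⟩ := ((hper 0).isCompact_range hH.continuous_zero).bddAbove
  obtain ⟨B, hB⟩ := hH.superlinear 0 le_rfl
  have hL : ∀ x v, -M ≤ Lag H x v := fun x v =>
    (neg_le_neg (hM ⟨x, rfl⟩)).trans (hH.neg_le_Lag x v)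
  have hA := min_mul_le_fundSol hL ht.le
  have hAdiag : ∀ y, fundSol (Lag H) t y y ≤ t * B := fun y =>
    (fundSol_self_le hL ht.le y).trans
      (mul_le_mul_of_nonneg_left (Lag_zero_le fun p => by simpa using hB y p) ht.le)
  exact le_antisymm (hwk.Tminus_Tplus_le ht (fun y => hm₁ ⟨y, rfl⟩) (fun y => hm₂ ⟨y, rfl⟩) hA
    hAdiag x) (le_Tminus_Tplus ht (fun y => hm₂ ⟨y, rfl⟩) hA x)

/-- A weak KAM solution is a fixed point of `T⁻_t ∘ T⁺_t` for every `t ≥ 0`. -/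
theorem stmt16 (H : E n → E n → ℝ) (hH : IsTonelli H)
    (hper : ∀ p : E n, ZPeriodic (fun x => H x p)) (c : ℝ) (u : E n → ℝ)
    (huper : ZPeriodic u) (huLip : ∃ κ : ℝ≥0, LipschitzWith κ u)
    (husc : ∃ C₀ : ℝ, 0 ≤ C₀ ∧ Semiconcave C₀ u)
    (hwk : WeakKAM (Lag H) c u) :
    ∀ t : ℝ, 0 ≤ t → ∀ x : E n,
      Tminus (Lag H) t (Tplus (Lag H) t u) x = u x :=
  stmt16_general H hH hper c u huper huLip hwk
end
end
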